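/- Let F ⊆ Adj(L, E) be an E-concrete Hilbert A-module and let D be the closed linear span of F ∘ F* in Adj(E). Then D is a C*-subalgebra of Adj(E), D is a closed two-sided *-ideal in M = {x ∈ Adj(E) : x∘F ⊆ F and x*∘F ⊆ F}, and the map determined by |ξ⟩⟨η| ↦ ξ ∘ η* extends to a *-isomorphism from the compact operators K(F) onto D. -/

import Mathlib

/-!
Since `F ∘ F* ∘ F ⊆ F`, the generators `ξ ∘ η*` of `D` map `F` into `F`; the algebraic claims
are checked on generators and pass to the closed span, and adjoints pass to the closure because
taking adjoints is isometric.

For the isometry let `σ d` be the norm of `ξ ↦ d ∘ ξ` on the unit ball of `F`. For self-adjoint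
`x ∈ D` one has `‖x‖ ^ 2 ^ k ≤ ‖x ^ 2 ^ k‖`, while `‖s ∘ x ^ m‖ ≤ C (σ x) ^ m` for `s` in the span
of the generators, because `ξ ∘ η* ∘ x ^ m = ξ ∘ (x ^ m ∘ η)*`. Approximating `x` by such an `s`
up to `‖x‖ / 2` forces `‖x‖ ≤ σ x`. For general `d ∈ D`,
`‖d‖ ^ 2 ≤ ‖d ∘ d*‖ ≤ σ (d ∘ d*) ≤ σ d * σ d* ≤ (σ d) ^ 2`.
-/

open scoped RightActions

/-- The Hilbert C⋆-module class `CStarModule` as it stood in Mathlib of December 2024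
(right `A`-action through `Aᵐᵒᵖ`, inner product `A`-linear on the right). -/
class CStarModuleOld (A E : Type*) [NonUnitalSemiring A] [StarRing A] [Module ℂ A]
    [AddCommGroup E] [Module ℂ E] [PartialOrder A] [SMul Aᵐᵒᵖ E] [Norm A] [Norm E]
    extends Inner A E where
  inner_add_right {x} {y} {z} : inner x (y + z) = inner x y + inner x z
  inner_self_nonneg {x} : 0 ≤ inner x x
  inner_self {x} : inner x x = 0 ↔ x = 0
  inner_op_smul_right {a : A} {x y : E} : inner x (y <• a) = inner x y * a
  inner_smul_right_complex {z : ℂ} {x} {y} : inner x (z • y) = z • inner x y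
  star_inner x y : star (inner x y) = inner y x
  norm_eq_sqrt_norm_inner_self x : ‖x‖ = Real.sqrt ‖inner x x‖

open scoped InnerProductSpace

namespace CStarModule

variable {A : Type*} [NonUnitalCStarAlgebra A] [PartialOrder A]
  {E₁ E₂ E₃ : Type*}
  [NormedAddCommGroup E₁] [NormedSpace ℂ E₁] [SMul A E₁] [CStarModule A E₁]
  [NormedAddCommGroup E₂] [NormedSpace ℂ E₂] [SMul A E₂] [CStarModule A E₂]
  [NormedAddCommGroup E₃] [NormedSpace ℂ E₃] [SMul A E₃] [CStarModule A E₃]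

variable (A) in
def IsAdjointPair (T : E₁ →L[ℂ] E₂) (T' : E₂ →L[ℂ] E₁) : Prop :=
  ∀ u v, ⟪T u, v⟫_A = ⟪u, T' v⟫_A

namespace IsAdjointPair

variable {T S : E₁ →L[ℂ] E₂} {T' S' : E₂ →L[ℂ] E₁}

lemma symm (h : IsAdjointPair A T T') : IsAdjointPair A T' T := fun u v => by
  rw [← star_inner v, ← h, star_inner]

lemma comp {R : E₂ →L[ℂ] E₃} {R' : E₃ →L[ℂ] E₂} (hR : IsAdjointPair A R R')
    (hT : IsAdjointPair A T T') : IsAdjointPair A (R.comp T) (T'.comp R') :=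
  fun _ _ => (hR _ _).trans (hT _ _)

lemma zero : IsAdjointPair A (0 : E₁ →L[ℂ] E₂) 0 := fun _ _ => by simp

lemma add (hT : IsAdjointPair A T T') (hS : IsAdjointPair A S S') :
    IsAdjointPair A (T + S) (T' + S') := fun u v => by simp [hT u v, hS u v]

lemma sub (hT : IsAdjointPair A T T') (hS : IsAdjointPair A S S') :
    IsAdjointPair A (T - S) (T' - S') := fun u v => by simp [hT u v, hS u v]

lemma smul (hT : IsAdjointPair A T T') (c : ℂ) : IsAdjointPair A (c • T) (star c • T') :=
  fun u v => by simp [hT u v]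

lemma pow {T T' : E₁ →L[ℂ] E₁} (h : IsAdjointPair A T T') (n : ℕ) :
    IsAdjointPair A (T ^ n) (T' ^ n) := by
  induction n with
  | zero => exact fun _ _ => rfl
  | succ n ih => rw [pow_succ, pow_succ']; exact ih.comp h

lemma unique (hT : IsAdjointPair A T T') (hS : IsAdjointPair A T S') : T' = S' := by
  ext v
  rw [← sub_eq_zero, ← inner_self (A := A), inner_sub_right, ← hT, ← hS, sub_self]

variable [StarOrderedRing A]

lemma norm_sq_le_norm_comp (h : IsAdjointPair A T T') : ‖T‖ ^ 2 ≤ ‖T'.comp T‖ := by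
  rw [← Real.sqrt_le_sqrt_iff (norm_nonneg _), Real.sqrt_sq (norm_nonneg _)]
  refine T.opNorm_le_bound (Real.sqrt_nonneg _) fun u => ?_
  calc ‖T u‖ = √‖⟪u, T' (T u)⟫_A‖ := by rw [← h, ← norm_sq_eq A, Real.sqrt_sq (norm_nonneg _)]
    _ ≤ √(‖T'.comp T‖ * ‖u‖ * ‖u‖) := by
      gcongr
      calc ‖⟪u, T' (T u)⟫_A‖ ≤ ‖u‖ * ‖T'.comp T u‖ := norm_inner_le E₁
        _ ≤ ‖T'.comp T‖ * ‖u‖ * ‖u‖ := by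
          rw [mul_comm]; gcongr; exact ContinuousLinearMap.le_opNorm _ _
    _ = √‖T'.comp T‖ * ‖u‖ := by
      rw [mul_assoc, Real.sqrt_mul (norm_nonneg _), Real.sqrt_mul_self (norm_nonneg _)]

lemma norm_le (h : IsAdjointPair A T T') : ‖T'‖ ≤ ‖T‖ := by
  have : ‖T'‖ ^ 2 ≤ ‖T‖ * ‖T'‖ := h.symm.norm_sq_le_norm_comp.trans (T.opNorm_comp_le T')
  nlinarith [norm_nonneg T, norm_nonneg T']

lemma norm_eq (h : IsAdjointPair A T T') : ‖T'‖ = ‖T‖ :=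
  h.norm_le.antisymm h.symm.norm_le

lemma pow_two_pow_norm_le {T : E₁ →L[ℂ] E₁} (h : IsAdjointPair A T T) (k : ℕ) :
    ‖T‖ ^ 2 ^ k ≤ ‖T ^ 2 ^ k‖ := by
  induction k with
  | zero => simp
  | succ k ih =>
    calc ‖T‖ ^ 2 ^ (k + 1) = (‖T‖ ^ 2 ^ k) ^ 2 := by rw [pow_succ, pow_mul]
      _ ≤ ‖T ^ 2 ^ k‖ ^ 2 := by gcongr
      _ ≤ ‖(T ^ 2 ^ k).comp (T ^ 2 ^ k)‖ := (h.pow _).norm_sq_le_norm_comp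
      _ = ‖T ^ 2 ^ (k + 1)‖ := by rw [pow_succ, pow_mul, sq]; rfl

end IsAdjointPair

variable [StarOrderedRing A]

lemma isClosed_setOf_isAdjointPair :
    IsClosed {p : (E₁ →L[ℂ] E₂) × (E₂ →L[ℂ] E₁) | IsAdjointPair A p.1 p.2} := by
  simp only [IsAdjointPair, Set.ofPred_forall]
  exact isClosed_iInter fun u => isClosed_iInter fun v => isClosed_eq
    (continuous_inner.comp ((continuous_fst.clm_apply continuous_const).prodMk continuous_const))
    (continuous_inner.comp (continuous_const.prodMk (continuous_snd.clm_apply continuous_const)))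

lemma exists_isAdjointPair_mem_closure [CompleteSpace E₁] {S : Set (E₁ →L[ℂ] E₂)}
    {S' : Set (E₂ →L[ℂ] E₁)} (hS : ∀ s ∈ S, ∃ s' ∈ S', IsAdjointPair A s s') {d : E₁ →L[ℂ] E₂}
    (hd : d ∈ closure S) : ∃ d' ∈ closure S', IsAdjointPair A d d' := by
  obtain ⟨f, hfS, hf⟩ := mem_closure_iff_seq_limit.1 hd
  choose g hgS hfg using fun n => hS (f n) (hfS n)
  have hg : CauchySeq g := Metric.cauchySeq_iff.2 fun ε hε =>
    (Metric.cauchySeq_iff.1 hf.cauchySeq ε hε).imp fun N hN m hm n hn => by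
      have := hN m hm n hn
      rw [dist_eq_norm] at this ⊢
      exact ((hfg m).sub (hfg n)).norm_le.trans_lt this
  obtain ⟨d', hd'⟩ := cauchySeq_tendsto_of_complete hg
  exact ⟨d', mem_closure_of_tendsto hd' (.of_forall hgS),
    isClosed_setOf_isAdjointPair.mem_of_tendsto (hf.prodMk_nhds hd') (.of_forall hfg)⟩

end CStarModule

open Filter Topology in
theorem norm_le_of_mem_closure_of_norm_mul_pow_le {R : Type*} [SeminormedRing R] {x : R}
    {S : Set R} {σ : ℝ} (hσ : 0 ≤ σ) (hx : x ∈ closure S)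
    (hpow : ∀ k : ℕ, ‖x‖ ^ 2 ^ k ≤ ‖x ^ 2 ^ k‖)
    (hS : ∀ s ∈ S, ∃ C, ∀ m : ℕ, ‖s * x ^ m‖ ≤ C * σ ^ m) : ‖x‖ ≤ σ := by
  by_contra! hlt
  set t := ‖x‖
  have ht : 0 < t := hσ.trans_lt hlt
  obtain ⟨s, hs, hxs⟩ := Metric.mem_closure_iff.1 hx (t / 2) (half_pos ht)
  obtain ⟨C, hC⟩ := hS s hs
  have hsplit (m : ℕ) (hm : 0 < m) : ‖x ^ (m + 1)‖ ≤ C * σ ^ m + t / 2 * t ^ m :=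
    calc ‖x ^ (m + 1)‖ = ‖s * x ^ m + (x - s) * x ^ m‖ := by
          rw [← add_mul, add_sub_cancel, pow_succ']
      _ ≤ C * σ ^ m + t / 2 * t ^ m := by
        refine (norm_add_le _ _).trans (add_le_add (hC m) ((norm_mul_le _ _).trans ?_))
        rw [← dist_eq_norm]
        exact mul_le_mul hxs.le (norm_pow_le' x hm) (norm_nonneg _) (by positivity)
  have hρ : Tendsto (fun m : ℕ => (σ / t) ^ m) atTop (𝓝 0) :=
    tendsto_pow_atTop_nhds_zero_of_lt_one (div_nonneg hσ ht.le) ((div_lt_one ht).2 hlt)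
  obtain ⟨N, hN⟩ :=
    eventually_atTop.1 ((hρ.const_mul (2 * C)).eventually_lt_const (by rwa [mul_zero]))
  -- `m + 1` is a power of two, so that `hpow` bounds `‖x ^ (m + 1)‖` from below.
  set m := 2 ^ (N + 1) - 1
  have hNm : N < m := by have := @Nat.lt_two_pow_self (N + 1); omega
  have hupper := hN m hNm.le
  have hm : m + 1 = 2 ^ (N + 1) := Nat.sub_add_cancel Nat.one_le_two_pow
  have hlower : t ^ (m + 1) ≤ C * σ ^ m + t / 2 * t ^ m :=
    calc t ^ (m + 1) ≤ ‖x ^ (m + 1)‖ := by rw [hm]; exact hpow (N + 1)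
      _ ≤ _ := hsplit m (by omega)
  rw [div_pow, ← mul_div_assoc, div_lt_iff₀ (by positivity)] at hupper
  rw [pow_succ] at hlower
  linarith

section normOn

variable {L E : Type*} [NormedAddCommGroup L] [NormedSpace ℂ L]
  [NormedAddCommGroup E] [NormedSpace ℂ E] {F : Set (L →L[ℂ] E)}

noncomputable def normOn (F : Set (L →L[ℂ] E)) (d : E →L[ℂ] E) : ℝ :=
  ⨆ ξ : {ξ : L →L[ℂ] E // ξ ∈ F ∧ ‖ξ‖ ≤ 1}, ‖d.comp ξ.1‖

lemma normOn_nonneg (F : Set (L →L[ℂ] E)) (d : E →L[ℂ] E) : 0 ≤ normOn F d :=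
  Real.iSup_nonneg fun _ => norm_nonneg _

lemma norm_comp_le_normOn (d : E →L[ℂ] E) {ξ : L →L[ℂ] E} (hξ : ξ ∈ F) (h1 : ‖ξ‖ ≤ 1) :
    ‖d.comp ξ‖ ≤ normOn F d := by
  refine le_ciSup (f := fun ξ : {ξ : L →L[ℂ] E // ξ ∈ F ∧ ‖ξ‖ ≤ 1} => ‖d.comp ξ.1‖)
    ⟨‖d‖, ?_⟩ ⟨ξ, hξ, h1⟩
  rintro _ ⟨ζ, rfl⟩
  exact (d.opNorm_comp_le ζ.1).trans (mul_le_of_le_one_right (norm_nonneg d) ζ.2.2)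

lemma normOn_le_norm (d : E →L[ℂ] E) : normOn F d ≤ ‖d‖ :=
  Real.iSup_le (fun ζ => (d.opNorm_comp_le ζ.1).trans
    (mul_le_of_le_one_right (norm_nonneg d) ζ.2.2)) (norm_nonneg d)

lemma norm_comp_le_normOn_mul (hF : ∀ (c : ℂ), ∀ ξ ∈ F, c • ξ ∈ F) (d : E →L[ℂ] E)
    {ξ : L →L[ℂ] E} (hξ : ξ ∈ F) : ‖d.comp ξ‖ ≤ normOn F d * ‖ξ‖ := by
  rcases eq_or_ne ξ 0 with rfl | hξ0
  · simp
  have hpos : 0 < ‖ξ‖ := norm_pos_iff.2 hξ0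
  have hc : ‖((‖ξ‖⁻¹ : ℝ) : ℂ)‖ = ‖ξ‖⁻¹ := by simp
  have := norm_comp_le_normOn d (hF _ ξ hξ) (by rw [norm_smul, hc, inv_mul_cancel₀ hpos.ne'])
  rw [ContinuousLinearMap.comp_smul, norm_smul, hc, inv_mul_le_iff₀ hpos] at this
  linarith

lemma normOn_comp_le (hF : ∀ (c : ℂ), ∀ ξ ∈ F, c • ξ ∈ F) (d : E →L[ℂ] E) {d' : E →L[ℂ] E}
    (hd' : ∀ ξ ∈ F, d'.comp ξ ∈ F) : normOn F (d.comp d') ≤ normOn F d * normOn F d' :=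
  Real.iSup_le (fun ξ =>
    calc ‖(d.comp d').comp ξ.1‖ = ‖d.comp (d'.comp ξ.1)‖ := rfl
      _ ≤ normOn F d * ‖d'.comp ξ.1‖ := norm_comp_le_normOn_mul hF d (hd' _ ξ.2.1)
      _ ≤ normOn F d * normOn F d' := by
        gcongr
        · exact normOn_nonneg F d
        · exact norm_comp_le_normOn d' ξ.2.1 ξ.2.2)
    (mul_nonneg (normOn_nonneg F d) (normOn_nonneg F d'))

lemma norm_pow_comp_le (hF : ∀ (c : ℂ), ∀ ξ ∈ F, c • ξ ∈ F) {x : E →L[ℂ] E}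
    (hx : ∀ ξ ∈ F, x.comp ξ ∈ F) (m : ℕ) {ξ : L →L[ℂ] E} (hξ : ξ ∈ F) :
    ‖(x ^ m).comp ξ‖ ≤ normOn F x ^ m * ‖ξ‖ := by
  induction m generalizing ξ with
  | zero => simp [ContinuousLinearMap.one_def]
  | succ m ih =>
    calc ‖(x ^ (m + 1)).comp ξ‖ = ‖(x ^ m).comp (x.comp ξ)‖ := by rw [pow_succ]; rfl
      _ ≤ normOn F x ^ m * ‖x.comp ξ‖ := ih (hx ξ hξ)
      _ ≤ normOn F x ^ m * (normOn F x * ‖ξ‖) := by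
        gcongr
        · exact pow_nonneg (normOn_nonneg F x) m
        · exact norm_comp_le_normOn_mul hF x hξ
      _ = normOn F x ^ (m + 1) * ‖ξ‖ := by ring

end normOn

section TernaryRingOfOperators

open CStarModule

variable {A : Type*} [NonUnitalCStarAlgebra A] [PartialOrder A]
  {L E : Type*} [NormedAddCommGroup L] [NormedSpace ℂ L] [SMul A L] [CStarModule A L]
  [NormedAddCommGroup E] [NormedSpace ℂ E] [SMul A E] [CStarModule A E]
  {F : Set (L →L[ℂ] E)} {adjF : (L →L[ℂ] E) → (E →L[ℂ] L)}

variable (A) in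
/-- The paper's `E`-concrete Hilbert `A`-module with `A` eliminated: `F ∘ A ⊆ F` and
`F* ∘ F ⊆ A` enter only through `F ∘ F* ∘ F ⊆ F`. -/
structure IsTernaryRingOfOperators (F : Set (L →L[ℂ] E)) (adjF : (L →L[ℂ] E) → (E →L[ℂ] L)) :
    Prop where
  isClosed : IsClosed F
  add_mem : ∀ ξ ∈ F, ∀ η ∈ F, ξ + η ∈ F
  smul_mem : ∀ (c : ℂ), ∀ ξ ∈ F, c • ξ ∈ F
  isAdjointPair : ∀ ξ ∈ F, IsAdjointPair A ξ (adjF ξ)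
  comp_adj_comp_mem : ∀ ξ ∈ F, ∀ η ∈ F, ∀ ζ ∈ F, ξ.comp ((adjF η).comp ζ) ∈ F

variable (F adjF) in
def compAdjSpan : Submodule ℂ (E →L[ℂ] E) :=
  Submodule.span ℂ {d | ∃ ξ ∈ F, ∃ η ∈ F, d = ξ.comp (adjF η)}

lemma comp_adj_mem_compAdjSpan {ξ η : L →L[ℂ] E} (hξ : ξ ∈ F) (hη : η ∈ F) :
    ξ.comp (adjF η) ∈ compAdjSpan F adjF :=
  Submodule.subset_span ⟨ξ, hξ, η, hη, rfl⟩

lemma compAdjSpan_induction {p : (E →L[ℂ] E) → Prop}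
    (gen : ∀ ξ ∈ F, ∀ η ∈ F, p (ξ.comp (adjF η))) (zero : p 0)
    (add : ∀ a b, p a → p b → p (a + b)) (smul : ∀ (c : ℂ) a, p a → p (c • a))
    {d : E →L[ℂ] E} (hd : d ∈ compAdjSpan F adjF) : p d := by
  induction hd using Submodule.span_induction with
  | mem x hx => obtain ⟨ξ, hξ, η, hη, rfl⟩ := hx; exact gen ξ hξ η hη
  | zero => exact zero
  | add a b _ _ ha hb => exact add a b ha hb
  | smul c a _ ha => exact smul c a ha

variable (F adjF) in
noncomputable def compAdjClosure : Submodule ℂ (E →L[ℂ] E) :=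
  (compAdjSpan F adjF).topologicalClosure

lemma compAdjClosure_induction {p : (E →L[ℂ] E) → Prop}
    (gen : ∀ ξ ∈ F, ∀ η ∈ F, p (ξ.comp (adjF η))) (zero : p 0)
    (add : ∀ a b, p a → p b → p (a + b)) (smul : ∀ (c : ℂ) a, p a → p (c • a))
    (closed : IsClosed {d | p d}) {d : E →L[ℂ] E} (hd : d ∈ compAdjClosure F adjF) : p d :=
  closure_minimal (fun _ => compAdjSpan_induction gen zero add smul) closed hd

lemma comp_mem_of_mem_compAdjClosure (hF : IsTernaryRingOfOperators A F adjF) {d : E →L[ℂ] E}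
    (hd : d ∈ compAdjClosure F adjF) {ζ : L →L[ℂ] E} (hζ : ζ ∈ F) : d.comp ζ ∈ F := by
  refine compAdjClosure_induction (p := fun d => d.comp ζ ∈ F) (fun ξ hξ η hη => ?_)
    ?_ (fun a b ha hb => ?_) (fun c a ha => ?_) ?_ hd
  · exact hF.comp_adj_comp_mem ξ hξ η hη ζ hζ
  · simpa using hF.smul_mem 0 ζ hζ
  · simpa [ContinuousLinearMap.add_comp] using hF.add_mem _ ha _ hb
  · simpa [ContinuousLinearMap.smul_comp] using hF.smul_mem c _ ha
  · exact hF.isClosed.preimage ((ContinuousLinearMap.compL ℂ L E E).flip ζ).continuous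

lemma comp_mem_compAdjClosure_left {x : E →L[ℂ] E} (hx : ∀ ξ ∈ F, x.comp ξ ∈ F)
    {d : E →L[ℂ] E} (hd : d ∈ compAdjClosure F adjF) : x.comp d ∈ compAdjClosure F adjF := by
  refine compAdjClosure_induction (p := fun d => x.comp d ∈ compAdjClosure F adjF)
    (fun ξ hξ η hη => ?_) ?_ (fun a b ha hb => ?_) (fun c a ha => ?_) ?_ hd
  · exact (compAdjSpan F adjF).le_topologicalClosure (comp_adj_mem_compAdjSpan (hx ξ hξ) hη)
  · simp
  · simpa [ContinuousLinearMap.comp_add] using add_mem ha hb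
  · simpa [ContinuousLinearMap.comp_smul] using Submodule.smul_mem _ c ha
  · exact (Submodule.isClosed_topologicalClosure _).preimage
      (ContinuousLinearMap.compL ℂ E E E x).continuous

lemma comp_mem_compAdjClosure_right (hF : ∀ ξ ∈ F, IsAdjointPair A ξ (adjF ξ))
    {x y : E →L[ℂ] E} (hxy : IsAdjointPair A x y) (hy : ∀ ξ ∈ F, y.comp ξ ∈ F)
    {d : E →L[ℂ] E} (hd : d ∈ compAdjClosure F adjF) : d.comp x ∈ compAdjClosure F adjF := by
  refine compAdjClosure_induction (p := fun d => d.comp x ∈ compAdjClosure F adjF)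
    (fun ξ hξ η hη => ?_) ?_ (fun a b ha hb => ?_) (fun c a ha => ?_) ?_ hd
  · have : (adjF η).comp x = adjF (y.comp η) :=
      (hxy.symm.comp (hF η hη)).unique (hF _ (hy η hη))
    rw [ContinuousLinearMap.comp_assoc, this]
    exact (compAdjSpan F adjF).le_topologicalClosure (comp_adj_mem_compAdjSpan hξ (hy η hη))
  · simp
  · simpa [ContinuousLinearMap.add_comp] using add_mem ha hb
  · simpa [ContinuousLinearMap.smul_comp] using Submodule.smul_mem _ c ha
  · exact (Submodule.isClosed_topologicalClosure _).preimage
      ((ContinuousLinearMap.compL ℂ E E E).flip x).continuous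

variable [StarOrderedRing A]

lemma exists_isAdjointPair_mem_compAdjClosure [CompleteSpace E]
    (hF : ∀ ξ ∈ F, IsAdjointPair A ξ (adjF ξ)) {d : E →L[ℂ] E}
    (hd : d ∈ compAdjClosure F adjF) : ∃ d' ∈ compAdjClosure F adjF, IsAdjointPair A d d' := by
  refine exists_isAdjointPair_mem_closure (fun s hs => ?_) hd
  refine compAdjSpan_induction
    (p := fun s => ∃ s' ∈ (compAdjSpan F adjF : Set (E →L[ℂ] E)), IsAdjointPair A s s')
    (fun ξ hξ η hη => ?_) ⟨0, zero_mem _, .zero⟩ ?_ ?_ hs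
  · exact ⟨η.comp (adjF ξ), comp_adj_mem_compAdjSpan hη hξ, (hF ξ hξ).comp (hF η hη).symm⟩
  · rintro a b ⟨a', ha', ha⟩ ⟨b', hb', hb⟩
    exact ⟨a' + b', add_mem ha' hb', ha.add hb⟩
  · rintro c a ⟨a', ha', ha⟩
    exact ⟨star c • a', Submodule.smul_mem _ _ ha', ha.smul c⟩

lemma exists_norm_mul_pow_le (hF : IsTernaryRingOfOperators A F adjF) {x : E →L[ℂ] E}
    (hx : IsAdjointPair A x x) (hxF : ∀ ξ ∈ F, x.comp ξ ∈ F) {s : E →L[ℂ] E}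
    (hs : s ∈ compAdjSpan F adjF) : ∃ C, ∀ m : ℕ, ‖s * x ^ m‖ ≤ C * normOn F x ^ m := by
  refine compAdjSpan_induction (p := fun s => ∃ C, ∀ m : ℕ, ‖s * x ^ m‖ ≤ C * normOn F x ^ m)
    (fun ξ hξ η hη => ⟨‖ξ‖ * ‖η‖, fun m => ?_⟩) ⟨0, by simp⟩ ?_ ?_ hs
  · calc ‖ξ.comp (adjF η) * x ^ m‖ = ‖ξ.comp ((adjF η).comp (x ^ m))‖ := rfl
      _ ≤ ‖ξ‖ * ‖(x ^ m).comp η‖ := by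
        grw [ContinuousLinearMap.opNorm_comp_le, ((hx.pow m).comp (hF.isAdjointPair η hη)).norm_le]
      _ ≤ ‖ξ‖ * ‖η‖ * normOn F x ^ m := by
        grw [norm_pow_comp_le hF.smul_mem hxF m hη]
        · exact le_of_eq (by ring)
  · rintro a b ⟨Ca, ha⟩ ⟨Cb, hb⟩
    exact ⟨Ca + Cb, fun m => by grw [add_mul, norm_add_le, ha m, hb m, add_mul]⟩
  · rintro c a ⟨Ca, ha⟩
    exact ⟨‖c‖ * Ca, fun m => by grw [smul_mul_assoc, norm_smul, ha m, mul_assoc]⟩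

lemma norm_le_normOn_of_isAdjointPair_self (hF : IsTernaryRingOfOperators A F adjF)
    {x : E →L[ℂ] E} (hxD : x ∈ compAdjClosure F adjF) (hx : IsAdjointPair A x x) :
    ‖x‖ ≤ normOn F x :=
  norm_le_of_mem_closure_of_norm_mul_pow_le (normOn_nonneg F x) hxD hx.pow_two_pow_norm_le
    fun _ => exists_norm_mul_pow_le hF hx fun _ => comp_mem_of_mem_compAdjClosure hF hxD

lemma normOn_le_of_isAdjointPair (hF : IsTernaryRingOfOperators A F adjF) {d d' : E →L[ℂ] E}
    (h : IsAdjointPair A d d') (hd' : ∀ ξ ∈ F, d'.comp ξ ∈ F) : normOn F d' ≤ normOn F d := by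
  refine Real.iSup_le (fun ξ => ?_) (normOn_nonneg F d)
  have hζ := hd' ξ.1 ξ.2.1
  set ζ := d'.comp ξ.1
  have : ‖ζ‖ ^ 2 ≤ normOn F d * ‖ζ‖ :=
    calc ‖ζ‖ ^ 2 ≤ ‖((adjF ζ).comp d').comp ξ.1‖ := (hF.isAdjointPair ζ hζ).norm_sq_le_norm_comp
      _ ≤ ‖(adjF ζ).comp d'‖ * ‖ξ.1‖ := ContinuousLinearMap.opNorm_comp_le _ _
      _ ≤ ‖(adjF ζ).comp d'‖ := mul_le_of_le_one_right (norm_nonneg _) ξ.2.2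
      _ ≤ ‖d.comp ζ‖ := (h.comp (hF.isAdjointPair ζ hζ)).norm_le
      _ ≤ normOn F d * ‖ζ‖ := norm_comp_le_normOn_mul hF.smul_mem d hζ
  nlinarith [norm_nonneg ζ, normOn_nonneg F d]

lemma norm_eq_normOn_of_mem_compAdjClosure [CompleteSpace E]
    (hF : IsTernaryRingOfOperators A F adjF) {d : E →L[ℂ] E} (hd : d ∈ compAdjClosure F adjF) :
    ‖d‖ = normOn F d := by
  obtain ⟨d', hd', hdd'⟩ := exists_isAdjointPair_mem_compAdjClosure hF.isAdjointPair hd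
  have hd'F : ∀ ξ ∈ F, d'.comp ξ ∈ F := fun _ => comp_mem_of_mem_compAdjClosure hF hd'
  have hdd'D : d.comp d' ∈ compAdjClosure F adjF := comp_mem_compAdjClosure_left
    (fun _ => comp_mem_of_mem_compAdjClosure hF hd) hd'
  have hsq : ‖d‖ ^ 2 ≤ normOn F d ^ 2 :=
    calc ‖d‖ ^ 2 = ‖d'‖ ^ 2 := by rw [hdd'.norm_eq]
      _ ≤ ‖d.comp d'‖ := hdd'.symm.norm_sq_le_norm_comp
      _ ≤ normOn F (d.comp d') :=
        norm_le_normOn_of_isAdjointPair_self hF hdd'D (hdd'.comp hdd'.symm)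
      _ ≤ normOn F d * normOn F d' := normOn_comp_le hF.smul_mem d hd'F
      _ ≤ normOn F d ^ 2 := by
        grw [sq, normOn_le_of_isAdjointPair hF hdd' hd'F]
        exact normOn_nonneg F d
  exact le_antisymm (pow_le_pow_iff_left₀ (norm_nonneg d) (normOn_nonneg F d) two_ne_zero |>.1 hsq)
    (normOn_le_norm d)

end TernaryRingOfOperators

namespace CStarModuleOld

open MulOpposite

variable {B : Type*} [NonUnitalCStarAlgebra B] [PartialOrder B]

/-- The old convention (right action, inner product right `B`-linear) is Mathlib's convention
over the opposite algebra `Bᵐᵒᵖ`. -/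
instance toCStarModuleMulOpposite {E : Type*} [NormedAddCommGroup E] [NormedSpace ℂ E]
    [SMul Bᵐᵒᵖ E] [CStarModuleOld B E] : CStarModule Bᵐᵒᵖ E where
  inner x y := op (inner B x y)
  inner_add_right := by simp [inner_add_right]
  inner_self_nonneg := op_nonneg.mpr inner_self_nonneg
  inner_self := by simp [inner_self]
  inner_op_smul_right {a} := by
    induction a using MulOpposite.rec'
    simp [inner_op_smul_right]
  inner_smul_right_complex := by simp [inner_smul_right_complex]
  star_inner x y := by rw [← op_star, star_inner]
  norm_eq_sqrt_norm_inner_self := norm_eq_sqrt_norm_inner_self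

lemma isAdjointPair_op_iff {E₁ E₂ : Type*} [NormedAddCommGroup E₁] [NormedSpace ℂ E₁]
    [SMul Bᵐᵒᵖ E₁] [CStarModuleOld B E₁] [NormedAddCommGroup E₂] [NormedSpace ℂ E₂]
    [SMul Bᵐᵒᵖ E₂] [CStarModuleOld B E₂] {T : E₁ →L[ℂ] E₂} {T' : E₂ →L[ℂ] E₁} :
    CStarModule.IsAdjointPair Bᵐᵒᵖ T T' ↔ ∀ u v, (inner B (T u) v : B) = inner B u (T' v) :=
  forall₂_congr fun _ _ => op_inj

end CStarModuleOld

open CStarModule CStarModuleOld in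
theorem fixed_point_ideal_and_compacts_general
    {B : Type*} [NonUnitalCStarAlgebra B] [PartialOrder B] [StarOrderedRing B]
    {L : Type*} [NormedAddCommGroup L] [NormedSpace ℂ L]
    [SMul Bᵐᵒᵖ L] [CStarModuleOld B L]
    {E : Type*} [NormedAddCommGroup E] [NormedSpace ℂ E] [CompleteSpace E]
    [SMul Bᵐᵒᵖ E] [CStarModuleOld B E]
    (A : Set (L →L[ℂ] L))
    (F : Set (L →L[ℂ] E)) (adjF : (L →L[ℂ] E) → (E →L[ℂ] L))
    (hF_closed : IsClosed F)
    (hF_add : ∀ ξ ∈ F, ∀ η ∈ F, ξ + η ∈ F)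
    (hF_smul : ∀ (c : ℂ), ∀ ξ ∈ F, c • ξ ∈ F)
    (hadjF : ∀ ξ ∈ F, ∀ (x : L) (y : E), (inner B (ξ x) y : B) = inner B x (adjF ξ y))
    (hFA : ∀ ξ ∈ F, ∀ a ∈ A, ξ.comp a ∈ F)
    (hFF : ∀ ξ ∈ F, ∀ η ∈ F, (adjF ξ).comp η ∈ A) :
    letI D : Set (E →L[ℂ] E) :=
      closure (Submodule.span ℂ
        {d : E →L[ℂ] E | ∃ ξ ∈ F, ∃ η ∈ F, d = ξ.comp (adjF η)} : Set (E →L[ℂ] E))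
    letI M : Set (E →L[ℂ] E) :=
      {x : E →L[ℂ] E | ∃ y : E →L[ℂ] E,
        (∀ (u v : E), (inner B (x u) v : B) = inner B u (y v)) ∧
        (∀ ξ ∈ F, x.comp ξ ∈ F) ∧ (∀ ξ ∈ F, y.comp ξ ∈ F)}
    -- `D` is a *-subalgebra (it is closed and a subspace by construction):
    (∀ d ∈ D, ∀ d' ∈ D, d.comp d' ∈ D) ∧
    (∀ d ∈ D, ∃ d' ∈ D, ∀ (u v : E), (inner B (d u) v : B) = inner B u (d' v)) ∧
    -- `D` is a two-sided ideal in `M`: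
    (∀ x ∈ M, ∀ d ∈ D, x.comp d ∈ D ∧ d.comp x ∈ D) ∧
    -- the *-isomorphism `K(F) ≅ D`, realized by left composition on `F`,
    -- sends `|ξ⟩⟨η|` to `ξ ∘ η*`, is injective and isometric:
    (∀ ξ ∈ F, ∀ η ∈ F, ξ.comp (adjF η) ∈ D) ∧
    (∀ d ∈ D, (∀ ξ ∈ F, d.comp ξ = 0) → d = 0) ∧
    (∀ d ∈ D, ‖d‖ = ⨆ ξ : {ξ : L →L[ℂ] E // ξ ∈ F ∧ ‖ξ‖ ≤ 1}, ‖d.comp ξ.1‖) := by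
  have hF : IsTernaryRingOfOperators Bᵐᵒᵖ F adjF :=
    { isClosed := hF_closed
      add_mem := hF_add
      smul_mem := hF_smul
      isAdjointPair := fun ξ hξ => isAdjointPair_op_iff.2 (hadjF ξ hξ)
      comp_adj_comp_mem := fun ξ hξ η hη ζ hζ => hFA ξ hξ _ (hFF η hη ζ hζ) }
  have hDF {d} (hd : d ∈ compAdjClosure F adjF) : ∀ ξ ∈ F, d.comp ξ ∈ F :=
    fun _ => comp_mem_of_mem_compAdjClosure hF hd
  refine ⟨fun d hd d' hd' => comp_mem_compAdjClosure_left (hDF hd) hd', fun d hd => ?_,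
    fun x ⟨y, hxy, hxF, hyF⟩ d hd => ⟨comp_mem_compAdjClosure_left hxF hd,
      comp_mem_compAdjClosure_right hF.isAdjointPair (isAdjointPair_op_iff.2 hxy) hyF hd⟩,
    fun ξ hξ η hη => (compAdjSpan F adjF).le_topologicalClosure (comp_adj_mem_compAdjSpan hξ hη),
    fun d hd h0 => ?_, fun d hd => norm_eq_normOn_of_mem_compAdjClosure hF hd⟩
  · obtain ⟨d', hd', hdd'⟩ := exists_isAdjointPair_mem_compAdjClosure hF.isAdjointPair hd
    exact ⟨d', hd', isAdjointPair_op_iff.1 hdd'⟩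
  · rw [← norm_eq_zero, norm_eq_normOn_of_mem_compAdjClosure hF hd]
    simp [normOn, fun ξ : {ξ : L →L[ℂ] E // ξ ∈ F ∧ ‖ξ‖ ≤ 1} => h0 ξ.1 ξ.2.1]

/-- Let `F ⊆ Adj(L, E)` be an `E`-concrete Hilbert `A`-module and let `D` be the
closed linear span of `F ∘ F*` in `Adj(E)`. Then `D` is a C*-subalgebra of `Adj(E)` which is a
closed two-sided *-ideal in `M = {x : x∘F ⊆ F and x*∘F ⊆ F}`, and the map `|ξ⟩⟨η| ↦ ξ ∘ η*`
extends to a *-isomorphism of the compact operators `K(F)` onto `D` (equivalently: `D` acts on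
`F` by left composition injectively and isometrically, with the rank-one operators of `F`
corresponding exactly to the generators `ξ ∘ η*` of `D`). -/
theorem fixed_point_ideal_and_compacts
    {B : Type*} [NonUnitalCStarAlgebra B] [PartialOrder B] [StarOrderedRing B]
    {L : Type*} [NormedAddCommGroup L] [NormedSpace ℂ L] [CompleteSpace L]
    [SMul Bᵐᵒᵖ L] [CStarModuleOld B L]
    {E : Type*} [NormedAddCommGroup E] [NormedSpace ℂ E] [CompleteSpace E]
    [SMul Bᵐᵒᵖ E] [CStarModuleOld B E]
    (A : Set (L →L[ℂ] L))
    (F : Set (L →L[ℂ] E)) (adjF : (L →L[ℂ] E) → (E →L[ℂ] L))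
    (hF_closed : IsClosed F)
    (hF_add : ∀ ξ ∈ F, ∀ η ∈ F, ξ + η ∈ F)
    (hF_smul : ∀ (c : ℂ), ∀ ξ ∈ F, c • ξ ∈ F)
    (hadjF : ∀ ξ ∈ F, ∀ (x : L) (y : E), (inner B (ξ x) y : B) = inner B x (adjF ξ y))
    (hFA : ∀ ξ ∈ F, ∀ a ∈ A, ξ.comp a ∈ F)
    (hFF : ∀ ξ ∈ F, ∀ η ∈ F, (adjF ξ).comp η ∈ A) :
    letI D : Set (E →L[ℂ] E) :=
      closure (Submodule.span ℂ
        {d : E →L[ℂ] E | ∃ ξ ∈ F, ∃ η ∈ F, d = ξ.comp (adjF η)} : Set (E →L[ℂ] E))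
    letI M : Set (E →L[ℂ] E) :=
      {x : E →L[ℂ] E | ∃ y : E →L[ℂ] E,
        (∀ (u v : E), (inner B (x u) v : B) = inner B u (y v)) ∧
        (∀ ξ ∈ F, x.comp ξ ∈ F) ∧ (∀ ξ ∈ F, y.comp ξ ∈ F)}
    -- `D` is a *-subalgebra (it is closed and a subspace by construction):
    (∀ d ∈ D, ∀ d' ∈ D, d.comp d' ∈ D) ∧
    (∀ d ∈ D, ∃ d' ∈ D, ∀ (u v : E), (inner B (d u) v : B) = inner B u (d' v)) ∧
    -- `D` is a two-sided ideal in `M`: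
    (∀ x ∈ M, ∀ d ∈ D, x.comp d ∈ D ∧ d.comp x ∈ D) ∧
    -- the *-isomorphism `K(F) ≅ D`, realized by left composition on `F`,
    -- sends `|ξ⟩⟨η|` to `ξ ∘ η*`, is injective and isometric:
    (∀ ξ ∈ F, ∀ η ∈ F, ξ.comp (adjF η) ∈ D) ∧
    (∀ d ∈ D, (∀ ξ ∈ F, d.comp ξ = 0) → d = 0) ∧
    (∀ d ∈ D, ‖d‖ = ⨆ ξ : {ξ : L →L[ℂ] E // ξ ∈ F ∧ ‖ξ‖ ≤ 1}, ‖d.comp ξ.1‖) :=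
  fixed_point_ideal_and_compacts_general A F adjF hF_closed hF_add hF_smul hadjF hFA hFF
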